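/- The operator A(φ,ψ) := (−D_x³(φ) + 4u·D_x(φ) + 2u₁·φ + 2v·D_x(ψ), 2v·D_x(φ) + 2v₁·φ + D_x(ψ)) is a variational bivector on the coupled KdV–mKdV system: ℓ(A(φ,ψ)) + A(ℓ*(φ,ψ)) = (0,0) for all (φ,ψ) ∈ R². -/
import Mathlib


/-!
STATEMENT 12: The operator
`A(φ,ψ) := (−D_x³(φ) + 4u·D_x(φ) + 2u₁·φ + 2v·D_x(ψ), 2v·D_x(φ) + 2v₁·φ + D_x(ψ))`
is a variational bivector on the coupled KdV–mKdV system: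
`ℓ(A(φ,ψ)) + A(ℓ*(φ,ψ)) = (0,0)` for all `(φ,ψ) ∈ R²`.
-/

open MvPolynomial

noncomputable section

/-- The polynomial algebra `R = ℚ[u₀,u₁,…,v₀,v₁,…]`; `X (.inl k)` is `u_k`,
`X (.inr k)` is `v_k`. -/
abbrev MRing : Type := MvPolynomial (ℕ ⊕ ℕ) ℚ

/-- The jet variable `u_k`. -/
def uu (k : ℕ) : MRing := X (Sum.inl k)

/-- The jet variable `v_k`. -/
def vv (k : ℕ) : MRing := X (Sum.inr k)

/-- The total derivative `D_x`: `D_x(u_k) = u_{k+1}`, `D_x(v_k) = v_{k+1}`. -/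
def Dx : Derivation ℚ MRing MRing :=
  mkDerivation ℚ fun i =>
    match i with
    | Sum.inl k => uu (k + 1)
    | Sum.inr k => vv (k + 1)

/-- The right-hand side `f = −u₃ + 6uu₁ − 3vv₃ − 3v₁v₂ + 3u₁v² + 6uvv₁` of the
coupled KdV–mKdV system. -/
def fRhs : MRing :=
  -uu 3 + 6 * uu 0 * uu 1 - 3 * vv 0 * vv 3 - 3 * vv 1 * vv 2
    + 3 * uu 1 * vv 0 ^ 2 + 6 * uu 0 * vv 0 * vv 1

/-- The right-hand side `g = −v₃ + 3v²v₁ + 3uv₁ + 3u₁v` of the coupled KdV–mKdV system. -/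
def gRhs : MRing :=
  -vv 3 + 3 * vv 0 ^ 2 * vv 1 + 3 * uu 0 * vv 1 + 3 * uu 1 * vv 0

/-- The total derivative `D_t`: `D_t(u_k) = D_x^k(f)`, `D_t(v_k) = D_x^k(g)`. -/
def Dt : Derivation ℚ MRing MRing :=
  mkDerivation ℚ fun i =>
    match i with
    | Sum.inl k => (⇑Dx)^[k] fRhs
    | Sum.inr k => (⇑Dx)^[k] gRhs


@[simp] lemma Dx_uu (k : ℕ) : Dx (uu k) = uu (k+1) := mkDerivation_X _ _ _
@[simp] lemma Dx_vv (k : ℕ) : Dx (vv k) = vv (k+1) := mkDerivation_X _ _ _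
lemma Dt_uu (k : ℕ) : Dt (uu k) = (⇑Dx)^[k] fRhs := mkDerivation_X _ _ _
lemma Dt_vv (k : ℕ) : Dt (vv k) = (⇑Dx)^[k] gRhs := mkDerivation_X _ _ _

lemma dtdx (p : MRing) : Dt (Dx p) = Dx (Dt p) := by
  have h : ⁅Dt, Dx⁆ = 0 := by
    apply derivation_ext
    rintro (k|k) <;>
    · first
      | simp only [show ∀ k, (X (Sum.inl k):MRing) = uu k from fun _ => rfl]
      | simp only [show ∀ k, (X (Sum.inr k):MRing) = vv k from fun _ => rfl]
      simp [Derivation.commutator_apply, Dt_uu, Dt_vv, Function.iterate_succ_apply']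
  have := DFunLike.congr_fun h p
  simpa [Derivation.commutator_apply, sub_eq_zero] using this

@[simp] lemma Dx_ofNat (n : ℕ) [n.AtLeastTwo] : Dx (no_index (OfNat.ofNat n) : MRing) = 0 := by
  rw [← Nat.cast_ofNat]; exact Derivation.map_natCast Dx n
@[simp] lemma Dt_ofNat (n : ℕ) [n.AtLeastTwo] : Dt (no_index (OfNat.ofNat n) : MRing) = 0 := by
  rw [← Nat.cast_ofNat]; exact Derivation.map_natCast Dt n
@[simp] lemma Dx_one : Dx (no_index (OfNat.ofNat 1) : MRing) = 0 := Derivation.map_one_eq_zero Dx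
@[simp] lemma Dx_one' : Dx (no_index (One.one) : MRing) = 0 := Derivation.map_one_eq_zero Dx

@[simp] lemma Dt_uu0 : Dt (uu 0) = fRhs := Dt_uu 0
@[simp] lemma Dt_uu1 : Dt (uu 1) = Dx fRhs := Dt_uu 1
@[simp] lemma Dt_vv0 : Dt (vv 0) = gRhs := Dt_vv 0
@[simp] lemma Dt_vv1 : Dt (vv 1) = Dx gRhs := Dt_vv 1

/-- The linearization `ℓ` of the coupled KdV–mKdV system. -/
def ell (φ ψ : MRing) : MRing × MRing :=
  (Dt φ + Dx (Dx (Dx φ)) - (6 * uu 0 + 3 * vv 0 ^ 2) * Dx φ - 6 * (uu 1 + vv 0 * vv 1) * φ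
     + 3 * vv 0 * Dx (Dx (Dx ψ)) + 3 * vv 1 * Dx (Dx ψ)
     - (6 * uu 0 * vv 0 - 3 * vv 2) * Dx ψ
     + (3 * vv 3 - 6 * uu 1 * vv 0 - 6 * uu 0 * vv 1) * ψ,
   -(3 * vv 0) * Dx φ - 3 * vv 1 * φ + Dt ψ + Dx (Dx (Dx ψ))
     - 3 * (uu 0 + vv 0 ^ 2) * Dx ψ - (3 * uu 1 + 6 * vv 0 * vv 1) * ψ)

/-- The adjoint linearization `ℓ*` of the coupled KdV–mKdV system. -/
def ellStar (φ ψ : MRing) : MRing × MRing :=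
  (-Dt φ - Dx (Dx (Dx φ)) + (6 * uu 0 + 3 * vv 0 ^ 2) * Dx φ + 3 * vv 0 * Dx ψ,
   -(3 * vv 0) * Dx (Dx (Dx φ)) - 6 * vv 1 * Dx (Dx φ) + 6 * (uu 0 * vv 0 - vv 2) * Dx φ
     - Dt ψ - Dx (Dx (Dx ψ)) + 3 * (uu 0 + vv 0 ^ 2) * Dx ψ)

/-- The Hamiltonian operator `A` of the coupled KdV–mKdV system. -/
def Aop (φ ψ : MRing) : MRing × MRing :=
  (-Dx (Dx (Dx φ)) + 4 * uu 0 * Dx φ + 2 * uu 1 * φ + 2 * vv 0 * Dx ψ,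
   2 * vv 0 * Dx φ + 2 * vv 1 * φ + Dx ψ)

set_option maxHeartbeats 2000000 in
/-- `A` is a variational bivector on the coupled KdV–mKdV system. -/
theorem kdv_mkdv_A_is_variational_bivector (φ ψ : MRing) :
    ell (Aop φ ψ).1 (Aop φ ψ).2 + Aop (ellStar φ ψ).1 (ellStar φ ψ).2 = (0, 0) := by
  simp only [ell, Aop, ellStar, Prod.mk_add_mk, Prod.mk.injEq]
  constructor <;>
  · simp only [map_add, map_sub, map_neg, Derivation.leibniz, Derivation.leibniz_pow,
      smul_eq_mul, nsmul_eq_mul, dtdx, Dx_uu, Dx_vv, Dt_uu0, Dt_uu1, Dt_vv0, Dt_vv1,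
      fRhs, gRhs, Nat.cast_ofNat, pow_one, Dx_one, Dx_one', Dx_ofNat, Dt_ofNat,
      mul_zero, zero_mul, add_zero, zero_add]
    ring_nf
    try simp [Derivation.map_one_eq_zero]
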